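/- arXiv:2201.04103 — 7 statements merged into one kernel-verified Lean document; each statement's English description precedes it below -/
import Mathlib

section
/- Let G be a finite group and let U and V be Sylow-conjugate subgroups of G. Then the normal cores of U and V in G coincide, and U and V have the same index in G: [G:U] = [G:V]. -/
open Pointwise

/-- Two subgroups of `G` are conjugate if one is mapped onto the other by
conjugation by some element of `G`. -/
def Subgroup.IsConjugate {G : Type*} [Group G] (U V : Subgroup G) : Prop :=
  ∃ g : G, Subgroup.map (MulAut.conj g).toMonoidHom U = V

/-- Two subgroups `U, V` of `G` are Sylow-conjugate if for every prime `p` there are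
Sylow `p`-subgroups of `U` and of `V` which, viewed as subgroups of `G`,
are conjugate in `G`. -/
def Subgroup.SylowConjugate {G : Type*} [Group G] (U V : Subgroup G) : Prop :=
  ∀ p : ℕ, p.Prime → ∃ (P : Sylow p U) (Q : Sylow p V),
    Subgroup.IsConjugate ((P : Subgroup U).map U.subtype) ((Q : Subgroup V).map V.subtype)

section Aux

variable {G : Type*} [Group G]

lemma card_map_inj {G' : Type*} [Group G'] (H : Subgroup G) (f : G →* G')
    (hf : Function.Injective f) : Nat.card (H.map f) = Nat.card H :=
  (Nat.card_congr (H.equivMapOfInjective f hf).toEquiv).symm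

lemma isConjugate_symm {U V : Subgroup G} (h : U.IsConjugate V) : V.IsConjugate U := by
  obtain ⟨g, hg⟩ := h
  refine ⟨g⁻¹, ?_⟩
  rw [← hg, Subgroup.map_map]
  convert Subgroup.map_id U
  ext x
  simp
  group

lemma sylowConjugate_symm {U V : Subgroup G} (h : U.SylowConjugate V) :
    V.SylowConjugate U := by
  intro p hp
  obtain ⟨P, Q, hPQ⟩ := h p hp
  exact ⟨Q, P, isConjugate_symm hPQ⟩

lemma isConjugate_card_eq {U V : Subgroup G} (h : U.IsConjugate V) :
    Nat.card U = Nat.card V := by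
  obtain ⟨g, hg⟩ := h
  rw [← hg, card_map_inj _ _ (MulAut.conj g).injective]

lemma sylowConjugate_card_eq [Finite G] {U V : Subgroup G} (h : U.SylowConjugate V) :
    Nat.card U = Nat.card V := by
  have hU : Nat.card U ≠ 0 := Nat.card_pos.ne'
  have hV : Nat.card V ≠ 0 := Nat.card_pos.ne'
  refine Nat.factorization_inj hU hV ?_
  ext p
  by_cases hp : p.Prime
  · haveI : Fact p.Prime := ⟨hp⟩
    obtain ⟨P, Q, hPQ⟩ := h p hp
    have h1 : Nat.card ((P : Subgroup U).map U.subtype) =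
        p ^ (Nat.card U).factorization p := by
      rw [card_map_inj _ _ U.subtype_injective, Sylow.card_eq_multiplicity]
    have h2 : Nat.card ((Q : Subgroup V).map V.subtype) =
        p ^ (Nat.card V).factorization p := by
      rw [card_map_inj _ _ V.subtype_injective, Sylow.card_eq_multiplicity]
    have := isConjugate_card_eq hPQ
    rw [h1, h2] at this
    exact Nat.pow_right_injective hp.two_le this
  · rw [Nat.factorization_eq_zero_of_not_prime _ hp,
      Nat.factorization_eq_zero_of_not_prime _ hp]

lemma conj_map_subtype {U : Subgroup G} (P : Subgroup U) (u : U) :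
    (Subgroup.map (MulAut.conj u).toMonoidHom P).map U.subtype =
      Subgroup.map (MulAut.conj (u : G)).toMonoidHom (P.map U.subtype) := by
  rw [Subgroup.map_map, Subgroup.map_map]
  rfl

lemma normalCore_le_of_sylowConjugate [Finite G] {U V : Subgroup G}
    (h : U.SylowConjugate V) : U.normalCore ≤ V := by
  set N := U.normalCore with hNdef
  have hNU : N ≤ U := U.normalCore_le
  have hNnorm : N.Normal := U.normalCore_normal
  -- show N ⊓ V = N via cardinality
  have hdvd : Nat.card N ∣ Nat.card ↥(N ⊓ V) := by
    have hN0 : Nat.card N ≠ 0 := Nat.card_pos.ne'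
    have hNV0 : Nat.card ↥(N ⊓ V) ≠ 0 := Nat.card_pos.ne'
    rw [← Nat.factorization_le_iff_dvd hN0 hNV0, Finsupp.le_iff]
    intro p hp'
    rw [Nat.support_factorization] at hp'
    have hp : p.Prime := Nat.prime_of_mem_primeFactors hp'
    haveI : Fact p.Prime := ⟨hp⟩
    obtain ⟨P, Q, g, hg⟩ := h p hp
    -- a Sylow p-subgroup of N
    obtain ⟨S⟩ : Nonempty (Sylow p N) := inferInstance
    set SG : Subgroup G := (S : Subgroup N).map N.subtype with hSGdef
    have hSGcard : Nat.card SG = p ^ (Nat.card N).factorization p := by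
      rw [card_map_inj _ _ N.subtype_injective, Sylow.card_eq_multiplicity]
    have hSGN : SG ≤ N := Subgroup.map_subtype_le _
    have hSGU : SG ≤ U := hSGN.trans hNU
    -- SG as a p-subgroup of U lies in some Sylow of U
    have hpg : IsPGroup p (SG.subgroupOf U) := (S.isPGroup'.map _).comap_subtype
    obtain ⟨T, hT⟩ := hpg.exists_le_sylow
    obtain ⟨u, hu⟩ := MulAction.exists_smul_eq U P T
    -- back in G
    have hSG_le : SG ≤ Subgroup.map (MulAut.conj (u : G)).toMonoidHom
        ((P : Subgroup U).map U.subtype) := by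
      have h1 : SG = (SG.subgroupOf U).map U.subtype := by
        rw [Subgroup.subgroupOf_map_subtype, inf_eq_left.mpr hSGU]
      rw [h1, ← conj_map_subtype]
      refine Subgroup.map_mono ?_
      refine hT.trans ?_
      rw [← hu]
      rfl
    -- conjugate by c := g * u⁻¹ to land in Q
    set c : G := g * (u : G)⁻¹ with hcdef
    have hkey : Subgroup.map (MulAut.conj c).toMonoidHom SG ≤ N ⊓ V := by
      refine le_inf ?_ ?_
      · refine le_trans (Subgroup.map_mono hSGN) ?_
        rintro x ⟨y, hy, rfl⟩
        simpa using hNnorm.conj_mem y hy c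
      · calc Subgroup.map (MulAut.conj c).toMonoidHom SG
            ≤ Subgroup.map (MulAut.conj c).toMonoidHom
              (Subgroup.map (MulAut.conj (u : G)).toMonoidHom
                ((P : Subgroup U).map U.subtype)) := Subgroup.map_mono hSG_le
          _ = Subgroup.map (MulAut.conj g).toMonoidHom ((P : Subgroup U).map U.subtype) := by
              rw [Subgroup.map_map]
              congr 1
              ext x
              simp [hcdef, mul_assoc]
          _ = (Q : Subgroup V).map V.subtype := hg
          _ ≤ V := Subgroup.map_subtype_le _
    have hc : Nat.card (Subgroup.map (MulAut.conj c).toMonoidHom SG) =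
        p ^ (Nat.card N).factorization p := by
      rw [card_map_inj _ _ (MulAut.conj c).injective, hSGcard]
    have := Subgroup.card_dvd_of_le hkey
    rw [hc] at this
    exact (Nat.Prime.pow_dvd_iff_le_factorization hp hNV0).mp this
  have hle : N ⊓ V ≤ N := inf_le_left
  have hcard : Nat.card N ≤ Nat.card ↥(N ⊓ V) := Nat.le_of_dvd Nat.card_pos hdvd
  have : N ⊓ V = N := Subgroup.eq_of_le_of_card_ge hle hcard
  exact inf_eq_left.mp this

end Aux

theorem normalCore_eq_and_index_eq_of_sylowConjugate {G : Type*} [Group G] [Finite G]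
    (U V : Subgroup G) (h : Subgroup.SylowConjugate U V) :
    U.normalCore = V.normalCore ∧ U.index = V.index := by
  constructor
  · apply le_antisymm
    · exact (Subgroup.normal_le_normalCore (hN := U.normalCore_normal)).mpr
        (normalCore_le_of_sylowConjugate h)
    · exact (Subgroup.normal_le_normalCore (hN := V.normalCore_normal)).mpr
        (normalCore_le_of_sylowConjugate (sylowConjugate_symm h))
  · have hcard := sylowConjugate_card_eq h
    have h1 := U.card_mul_index
    have h2 := V.card_mul_index
    rw [hcard] at h1
    have hV : 0 < Nat.card V := Nat.card_pos
    exact Nat.eq_of_mul_eq_mul_left hV (h1.trans h2.symm)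
end

section
/- Let M be a number field such that M/ℚ is a Galois extension, let K and L be intermediate fields of M/ℚ, and suppose the fixing subgroups U = Gal(M/K) and V = Gal(M/L) are Sylow-conjugate in G = Gal(M/ℚ). Then [K:ℚ] = [L:ℚ], and the Galois closures of K/ℚ and of L/ℚ inside M coincide (equivalently, the normal closures of K and L over ℚ in M are equal as intermediate fields of M/ℚ). -/
open scoped Pointwise


theorem Subgroup.smul_eq_map_conj {G : Type*} [Group G] (g : G) (S : Subgroup G) :
    MulAut.conj g • S = S.map (MulAut.conj g).toMonoidHom := rfl

theorem Subgroup.IsConjugate.symm' {G : Type*} [Group G] {U V : Subgroup G}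
    (h : U.IsConjugate V) : V.IsConjugate U := by
  obtain ⟨g, hg⟩ := h
  refine ⟨g⁻¹, ?_⟩
  rw [← hg, Subgroup.map_map]
  have : (MulAut.conj g⁻¹).toMonoidHom.comp (MulAut.conj g).toMonoidHom = MonoidHom.id G := by
    ext x; simp [mul_assoc]
  rw [this, Subgroup.map_id]

theorem Subgroup.SylowConjugate.symm' {G : Type*} [Group G] {U V : Subgroup G}
    (h : U.SylowConjugate V) : V.SylowConjugate U := fun p hp => by
  obtain ⟨P, Q, hc⟩ := h p hp
  exact ⟨Q, P, hc.symm'⟩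

theorem Subgroup.card_map_subtype' {G : Type*} [Group G] (U : Subgroup G) (P : Subgroup U) :
    Nat.card (P.map U.subtype) = Nat.card P :=
  (Nat.card_congr (Subgroup.equivMapOfInjective P U.subtype U.subtype_injective).toEquiv).symm

theorem Subgroup.card_eq_of_isConjugate {G : Type*} [Group G] {U V : Subgroup G}
    (h : U.IsConjugate V) : Nat.card U = Nat.card V := by
  obtain ⟨g, hg⟩ := h
  rw [← hg]
  exact Nat.card_congr (Subgroup.equivMapOfInjective U _ (MulAut.conj g).injective).toEquiv

theorem Subgroup.card_smul {G : Type*} [Group G] (g : G) (S : Subgroup G) :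
    Nat.card (MulAut.conj g • S : Subgroup G) = Nat.card S :=
  (Subgroup.card_eq_of_isConjugate ⟨g, (Subgroup.smul_eq_map_conj g S).symm⟩).symm

theorem Subgroup.card_eq_of_sylowConjugate {G : Type*} [Group G] [Finite G] {U V : Subgroup G}
    (h : U.SylowConjugate V) : Nat.card U = Nat.card V := by
  have hU : Nat.card U ≠ 0 := Nat.card_pos.ne'
  have hV : Nat.card V ≠ 0 := Nat.card_pos.ne'
  have key : (Nat.card U).factorization = (Nat.card V).factorization := by
    ext p
    by_cases hp : p.Prime
    · haveI : Fact p.Prime := ⟨hp⟩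
      obtain ⟨P, Q, hc⟩ := h p hp
      have h1 : Nat.card (P : Subgroup U) = Nat.card (Q : Subgroup V) := by
        rw [← U.card_map_subtype' P, ← V.card_map_subtype' Q]
        exact Subgroup.card_eq_of_isConjugate hc
      rw [P.card_eq_multiplicity, Q.card_eq_multiplicity] at h1
      exact Nat.pow_right_injective hp.two_le h1
    · rw [Nat.factorization_eq_zero_of_not_prime _ hp,
        Nat.factorization_eq_zero_of_not_prime _ hp]
  exact Nat.dvd_antisymm ((Nat.factorization_le_iff_dvd hU hV).mp key.le)
    ((Nat.factorization_le_iff_dvd hV hU).mp key.ge)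

theorem Subgroup.normal_le_of_sylowConjugate {G : Type*} [Group G] [Finite G]
    {U V N : Subgroup G} (hN : N.Normal) (hNU : N ≤ U) (h : U.SylowConjugate V) : N ≤ V := by
  have hcard : Nat.card N ∣ Nat.card (N ⊓ V : Subgroup G) := by
    rw [← Nat.factorization_le_iff_dvd Nat.card_pos.ne' Nat.card_pos.ne']
    refine Finsupp.le_def.mpr fun p => ?_
    by_cases hp : p.Prime
    case neg => rw [Nat.factorization_eq_zero_of_not_prime _ hp]; exact Nat.zero_le _
    haveI : Fact p.Prime := ⟨hp⟩
    obtain ⟨P, Q, g, hg⟩ := h p hp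
    obtain ⟨R⟩ : Nonempty (Sylow p N) := inferInstance
    set RG : Subgroup G := (R : Subgroup N).map N.subtype with hRG
    have hRN : RG ≤ N := Subgroup.map_subtype_le _
    have hRU : RG ≤ U := hRN.trans hNU
    have hpR : IsPGroup p (RG.subgroupOf U) := (R.isPGroup'.map N.subtype).comap_subtype
    obtain ⟨S, hRS⟩ := hpR.exists_le_sylow
    obtain ⟨u, hu⟩ := MulAction.exists_smul_eq U S P
    have h1 : MulAut.conj (u : G) • RG ≤ (P : Subgroup U).map U.subtype := by
      have h2 : MulAut.conj u • (RG.subgroupOf U) ≤ (P : Subgroup U) := by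
        calc MulAut.conj u • RG.subgroupOf U ≤ MulAut.conj u • (S : Subgroup U) :=
              Subgroup.pointwise_smul_le_pointwise_smul_iff.mpr hRS
          _ = (P : Subgroup U) := by rw [← Sylow.coe_subgroup_smul, hu]
      have h3 := Subgroup.map_mono (f := U.subtype) h2
      rwa [Subgroup.conj_smul_subgroupOf hRU u, Subgroup.subgroupOf_map_subtype,
        inf_eq_left.mpr (Subgroup.conj_smul_le_of_le hRU u)] at h3
    set T : Subgroup G := MulAut.conj g • (MulAut.conj (u : G) • RG) with hT
    have hTV : T ≤ V := by
      calc T ≤ MulAut.conj g • ((P : Subgroup U).map U.subtype) :=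
            Subgroup.pointwise_smul_le_pointwise_smul_iff.mpr h1
        _ = (Q : Subgroup V).map V.subtype := by rw [Subgroup.smul_eq_map_conj]; exact hg
        _ ≤ V := Subgroup.map_subtype_le _
    have hTN : T ≤ N := by
      calc T ≤ MulAut.conj g • (MulAut.conj (u : G) • N) :=
            Subgroup.pointwise_smul_le_pointwise_smul_iff.mpr
              (Subgroup.pointwise_smul_le_pointwise_smul_iff.mpr hRN)
        _ = N := by rw [Subgroup.Normal.conj_smul_eq_self (u : G) N, Subgroup.Normal.conj_smul_eq_self g N]
    have hcardT : Nat.card T = p ^ (Nat.card N).factorization p := by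
      rw [hT, Subgroup.card_smul, Subgroup.card_smul, hRG, Subgroup.card_map_subtype',
        R.card_eq_multiplicity]
    have hdvd : (p ^ (Nat.card N).factorization p) ∣ Nat.card (N ⊓ V : Subgroup G) := by
      rw [← hcardT]; exact Subgroup.card_dvd_of_le (le_inf hTN hTV)
    exact (Nat.Prime.pow_dvd_iff_le_factorization hp Nat.card_pos.ne').mp hdvd
  have heq : N ⊓ V = N :=
    Subgroup.eq_of_le_of_card_ge inf_le_left (Nat.le_of_dvd Nat.card_pos hcard)
  exact heq ▸ inf_le_right

theorem IntermediateField.fixingSubgroup_anti' {F M : Type*} [Field F] [Field M] [Algebra F M]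
    {A B : IntermediateField F M} (hAB : A ≤ B) : B.fixingSubgroup ≤ A.fixingSubgroup := by
  intro g hg
  rw [IntermediateField.fixingSubgroup, _root_.mem_fixingSubgroup_iff] at hg ⊢
  exact fun y hy => hg y (hAB hy)

theorem normalClosure_le_of_sylowConjugate
    {M : Type*} [Field M] [NumberField M] [IsGalois ℚ M]
    (K L : IntermediateField ℚ M)
    (h : Subgroup.SylowConjugate K.fixingSubgroup L.fixingSubgroup) :
    IntermediateField.normalClosure ℚ K M ≤ IntermediateField.normalClosure ℚ L M := by
  haveI : FiniteDimensional ℚ M := inferInstance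
  haveI : Finite (M ≃ₐ[ℚ] M) := inferInstance
  haveI : IsGalois ℚ (IntermediateField.normalClosure ℚ L M) := @IsGalois.mk ℚ _ (IntermediateField.normalClosure ℚ L M) _ (IntermediateField.algebra' _) _ (normalClosure.normal ℚ L M)
  set NL := (IntermediateField.normalClosure ℚ L M).fixingSubgroup with hNL
  haveI hNormal : NL.Normal := inferInstance
  have hNLV : NL ≤ L.fixingSubgroup :=
    IntermediateField.fixingSubgroup_anti' (IntermediateField.le_normalClosure L)
  have hNLU : NL ≤ K.fixingSubgroup :=
    Subgroup.normal_le_of_sylowConjugate hNormal hNLV h.symm'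
  rw [show IntermediateField.normalClosure ℚ K M = ⨆ f : Gal(M/ℚ), K.map f from by
    convert IntermediateField.normalClosure_def'' K; exact Subsingleton.elim _ _, iSup_le_iff]
  intro σ
  rw [← IsGalois.fixedField_fixingSubgroup (IntermediateField.normalClosure ℚ L M),
    IntermediateField.le_iff_le, IsGalois.map_fixingSubgroup]
  calc NL = MulAut.conj σ • NL := (Subgroup.Normal.conj_smul_eq_self σ NL).symm
    _ ≤ MulAut.conj σ • K.fixingSubgroup :=
        Subgroup.pointwise_smul_le_pointwise_smul_iff.mpr hNLU

theorem degree_eq_and_normalClosure_eq_of_sylowConjugate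
    {M : Type*} [Field M] [NumberField M] [IsGalois ℚ M]
    (K L : IntermediateField ℚ M)
    (h : Subgroup.SylowConjugate K.fixingSubgroup L.fixingSubgroup) :
    Module.finrank ℚ K = Module.finrank ℚ L ∧
      IntermediateField.normalClosure ℚ K M = IntermediateField.normalClosure ℚ L M := by
  haveI : FiniteDimensional ℚ M := inferInstance
  haveI : Finite (M ≃ₐ[ℚ] M) := inferInstance
  constructor
  · classical
    have hU : Nat.card K.fixingSubgroup = Module.finrank K M := by
      rw [IsGalois.card_fixingSubgroup_eq_finrank]
    have hV : Nat.card L.fixingSubgroup = Module.finrank L M := by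
      rw [IsGalois.card_fixingSubgroup_eq_finrank]
    have hc := Subgroup.card_eq_of_sylowConjugate h
    have hKL : Module.finrank K M = Module.finrank L M := by rw [← hU, ← hV, hc]
    have h1 : Module.finrank ℚ K * Module.finrank K M = Module.finrank ℚ M :=
      Module.finrank_mul_finrank ℚ K M
    have h2 : Module.finrank ℚ L * Module.finrank L M = Module.finrank ℚ M :=
      Module.finrank_mul_finrank ℚ L M
    refine Nat.eq_of_mul_eq_mul_right (Module.finrank_pos : 0 < Module.finrank K M) ?_
    rw [h1, hKL, h2]
  · exact le_antisymm (normalClosure_le_of_sylowConjugate K L h)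
      (normalClosure_le_of_sylowConjugate L K h.symm')
end

section
/- Let U and V be finite groups of the same order n such that for every prime p, the Sylow p-subgroups of U and of V are isomorphic as groups. Fix bijections of U and of V with Fin n, and let Ū and V̄ denote the images of U and V in the symmetric group on Fin n under the resulting left regular permutation representations. Then Ū and V̄ are Sylow-conjugate subgroups of the symmetric group Sym(Fin n). -/
open MulAction

lemma free_action_decomp {G γ : Type*} [Group G] [MulAction G γ]
    (hfree : ∀ (g : G) (c : γ), g • c = c → g = 1) :
    ∃ f : G × orbitRel.Quotient G γ ≃ γ,
      ∀ (g g' : G) (ω : orbitRel.Quotient G γ), f (g * g', ω) = g • f (g', ω) := by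
  classical
  have hbij : Function.Bijective
      (fun x : G × orbitRel.Quotient G γ => x.1 • x.2.out) := by
    constructor
    · rintro ⟨g1, ω1⟩ ⟨g2, ω2⟩ h
      simp only at h
      have hω : ω1 = ω2 := by
        have hmem : ω1.out ∈ orbit G ω2.out := ⟨g1⁻¹ * g2, by
          show (g1⁻¹ * g2) • _ = _
          rw [mul_smul, ← h, inv_smul_smul]⟩
        have h2 : (⟦ω1.out⟧ : orbitRel.Quotient G γ) = ⟦ω2.out⟧ :=
          Quotient.sound ((orbitRel_apply).2 hmem)
        rwa [Quotient.out_eq, Quotient.out_eq] at h2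
      subst hω
      have h3 : (g2⁻¹ * g1) • ω1.out = ω1.out := by rw [mul_smul, h, inv_smul_smul]
      have h4 := hfree _ _ h3
      have h5 : g1 = g2 := by
        have := congrArg (g2 * ·) h4
        simpa [mul_assoc] using this
      simp [h5]
    · intro c
      have hmem : (⟦c⟧ : orbitRel.Quotient G γ).out ∈ orbit G c :=
        (orbitRel_apply).1 (Quotient.exact (Quotient.out_eq _))
      obtain ⟨g, hg⟩ := hmem
      exact ⟨(g⁻¹, ⟦c⟧), by simp [← hg]⟩
  refine ⟨Equiv.ofBijective _ hbij, fun g g' ω => ?_⟩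
  simp only [Equiv.ofBijective_apply, mul_smul]

lemma exists_equivariant_equiv {P Q α β : Type*} [Group P] [Group Q]
    [Finite P] [Finite α] [Finite β]
    [MulAction P α] [MulAction Q β] (φ : P ≃* Q)
    (hfreeP : ∀ (p : P) (a : α), p • a = a → p = 1)
    (hfreeQ : ∀ (q : Q) (b : β), q • b = b → q = 1)
    (hcard : Nat.card α = Nat.card β) :
    ∃ e : α ≃ β, ∀ (p : P) (a : α), e (p • a) = φ p • e a := by
  classical
  haveI : Finite Q := Finite.of_equiv P φ.toEquiv
  set ΩP := orbitRel.Quotient P α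
  set ΩQ := orbitRel.Quotient Q β
  obtain ⟨f, hf⟩ := free_action_decomp hfreeP
  obtain ⟨g, hg⟩ := free_action_decomp hfreeQ
  have hcardP : Nat.card P = Nat.card Q := Nat.card_congr φ.toEquiv
  have hΩ : Nat.card ΩP = Nat.card ΩQ := by
    have h1 : Nat.card P * Nat.card ΩP = Nat.card α := by
      rw [← Nat.card_prod]; exact Nat.card_congr f
    have h2 : Nat.card Q * Nat.card ΩQ = Nat.card β := by
      rw [← Nat.card_prod]; exact Nat.card_congr g
    have hP0 : 0 < Nat.card P := Nat.card_pos
    apply Nat.eq_of_mul_eq_mul_left hP0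
    rw [h1, hcard, ← h2, hcardP]
  haveI : Fintype ΩP := Fintype.ofFinite _
  haveI : Fintype ΩQ := Fintype.ofFinite _
  have hΩ' : Fintype.card ΩP = Fintype.card ΩQ := by
    rwa [← Nat.card_eq_fintype_card, ← Nat.card_eq_fintype_card]
  let ψ : ΩP ≃ ΩQ := Fintype.equivOfCardEq hΩ'
  refine ⟨f.symm.trans ((Equiv.prodCongr φ.toEquiv ψ).trans g), fun p a => ?_⟩
  obtain ⟨⟨q, ω⟩, rfl⟩ := f.surjective a
  have h1 : p • f (q, ω) = f (p * q, ω) := (hf p q ω).symm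
  simp only [h1, Equiv.trans_apply, Equiv.symm_apply_apply, Equiv.prodCongr_apply,
    Prod.map, MulEquiv.toEquiv_eq_coe, MulEquiv.coe_toEquiv, map_mul]
  exact hg (φ p) (φ q) (ψ ω)



/-- The left regular permutation representation of a group `U`, relative to a
bijection `e : U ≃ α`: the homomorphism `U →* Equiv.Perm α` obtained by transporting
the action of `U` on itself by left multiplication along `e`. -/
def regularRep {U α : Type*} [Group U] (e : U ≃ α) : U →* Equiv.Perm α where
  toFun u := (e.symm.trans (Equiv.mulLeft u)).trans e
  map_one' := by ext x; simp
  map_mul' u v := by ext x; simp [mul_assoc]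

lemma regularRep_apply {U α : Type*} [Group U] (e : U ≃ α) (u : U) (x : α) :
    regularRep e u x = e (u * e.symm x) := rfl

lemma regularRep_injective {U α : Type*} [Group U] (e : U ≃ α) :
    Function.Injective (regularRep e) := by
  intro u v h
  have h1 := congrArg (fun σ : Equiv.Perm α => σ (e 1)) h
  simp only [regularRep_apply, Equiv.symm_apply_apply, mul_one] at h1
  exact e.injective h1

theorem regular_images_sylowConjugate {U V : Type*} [Group U] [Group V]
    [Finite U] [Finite V] {n : ℕ}
    (hUV : Nat.card U = n ∧ Nat.card V = n)
    (hSylow : ∀ (p : ℕ), p.Prime → ∀ (P : Sylow p U) (Q : Sylow p V),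
      Nonempty ((P : Subgroup U) ≃* (Q : Subgroup V)))
    (eU : U ≃ Fin n) (eV : V ≃ Fin n) :
    Subgroup.SylowConjugate (regularRep eU).range (regularRep eV).range := by
  obtain ⟨hU, hV⟩ := hUV
  intro p hp
  haveI : Fact p.Prime := ⟨hp⟩
  obtain ⟨P⟩ : Nonempty (Sylow p U) := inferInstance
  obtain ⟨Q⟩ : Nonempty (Sylow p V) := inferInstance
  obtain ⟨φ⟩ := hSylow p hp P Q
  let ιU : U ≃* (regularRep eU).range := MonoidHom.ofInjective (regularRep_injective eU)
  let ιV : V ≃* (regularRep eV).range := MonoidHom.ofInjective (regularRep_injective eV)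
  let P' : Sylow p (regularRep eU).range := P.mapSurjective ιU.surjective
  let Q' : Sylow p (regularRep eV).range := Q.mapSurjective ιV.surjective
  refine ⟨P', Q', ?_⟩
  have hPimg : ((P' : Subgroup (regularRep eU).range).map (regularRep eU).range.subtype)
      = Subgroup.map (regularRep eU) (P : Subgroup U) := by
    rw [show (P' : Subgroup (regularRep eU).range)
        = Subgroup.map ιU.toMonoidHom (P : Subgroup U) from rfl, Subgroup.map_map]
    congr 1
  have hQimg : ((Q' : Subgroup (regularRep eV).range).map (regularRep eV).range.subtype)
      = Subgroup.map (regularRep eV) (Q : Subgroup V) := by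
    rw [show (Q' : Subgroup (regularRep eV).range)
        = Subgroup.map ιV.toMonoidHom (Q : Subgroup V) from rfl, Subgroup.map_map]
    congr 1
  rw [hPimg, hQimg]
  -- free actions of the Sylow subgroups on the ambient groups
  have hfreeP : ∀ (q : ↥(P : Subgroup U)) (a : U), q • a = a → q = 1 := by
    intro q a h
    have h' : (q : U) * a = a := h
    exact Subtype.ext (by simpa using mul_eq_right.mp h')
  have hfreeQ : ∀ (q : ↥(Q : Subgroup V)) (a : V), q • a = a → q = 1 := by
    intro q a h
    have h' : (q : V) * a = a := h
    exact Subtype.ext (by simpa using mul_eq_right.mp h')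
  obtain ⟨e, he⟩ := exists_equivariant_equiv φ hfreeP hfreeQ (hU.trans hV.symm)
  let σ : Equiv.Perm (Fin n) := (eU.symm.trans e).trans eV
  have key : ∀ (u : ↥(P : Subgroup U)),
      (MulAut.conj σ).toMonoidHom (regularRep eU ↑u) = regularRep eV ↑(φ u) := by
    intro u
    have he' : ∀ a : U, e ((u : U) * a) = (φ u : V) * e a := fun a => he u a
    refine Equiv.ext fun x => ?_
    show σ ((regularRep eU ↑u) (σ⁻¹ x)) = regularRep eV ↑(φ u) x
    have hσinv : σ⁻¹ x = eU (e.symm (eV.symm x)) := rfl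
    rw [hσinv, regularRep_apply, Equiv.symm_apply_apply]
    show eV (e (eU.symm (eU _))) = _
    rw [Equiv.symm_apply_apply, he', Equiv.apply_symm_apply, regularRep_apply]
  refine ⟨σ, ?_⟩
  ext z
  simp only [Subgroup.mem_map]
  constructor
  · rintro ⟨_, ⟨u, hu, rfl⟩, rfl⟩
    exact ⟨↑(φ ⟨u, hu⟩), (φ ⟨u, hu⟩).2, (key ⟨u, hu⟩).symm⟩
  · rintro ⟨v, hv, rfl⟩
    refine ⟨regularRep eU ↑(φ.symm ⟨v, hv⟩), ⟨↑(φ.symm ⟨v, hv⟩), (φ.symm ⟨v, hv⟩).2, rfl⟩, ?_⟩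
    rw [key (φ.symm ⟨v, hv⟩)]
    simp
end

section
/- Let G = GL₂(𝔽₃) be the group of invertible 2×2 matrices over the field with 3 elements. Let P be the cyclic subgroup generated by the matrix [[1,1],[0,1]], let A = [[1,0],[0,−1]] and B = [[−1,0],[0,1]], and set U = ⟨P, A⟩ and V = ⟨P, B⟩. Then U and V are Sylow-conjugate subgroups of G, but U and V are not conjugate in G. -/
open Matrix

/-- The element `[[1,1],[0,1]]` of `GL₂(𝔽₃)`. -/
noncomputable def glP : GL (Fin 2) (ZMod 3) :=
  Matrix.GeneralLinearGroup.mkOfDetNeZero !![1, 1; 0, 1] (by decide)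

/-- The element `A = [[1,0],[0,-1]]` of `GL₂(𝔽₃)`. -/
noncomputable def glA : GL (Fin 2) (ZMod 3) :=
  Matrix.GeneralLinearGroup.mkOfDetNeZero !![1, 0; 0, -1] (by decide)

/-- The element `B = [[-1,0],[0,1]]` of `GL₂(𝔽₃)`. -/
noncomputable def glB : GL (Fin 2) (ZMod 3) :=
  Matrix.GeneralLinearGroup.mkOfDetNeZero !![-1, 0; 0, 1] (by decide)

noncomputable def glW : GL (Fin 2) (ZMod 3) :=
  Matrix.GeneralLinearGroup.mkOfDetNeZero !![0, 1; 1, 0] (by decide)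

abbrev GG := GL (Fin 2) (ZMod 3)

lemma Subgroup.isConjugate_refl {G : Type*} [Group G] (X : Subgroup G) : X.IsConjugate X := by
  refine ⟨1, ?_⟩
  have h : MulAut.conj (1 : G) = 1 := map_one _
  rw [h]
  ext x
  simp

-- explicit description of U
def Uset : Set GG := {1, glP, glP^2, glA, glP*glA, glP^2*glA}
def Vset : Set GG := {1, glP, glP^2, glB, glP*glB, glP^2*glB}

def Usub : Subgroup GG where
  carrier := Uset
  one_mem' := Or.inl rfl
  mul_mem' := by
    intro a b ha hb
    simp only [Uset, Set.mem_insert_iff, Set.mem_singleton_iff] at ha hb ⊢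
    rcases ha with rfl|rfl|rfl|rfl|rfl|rfl <;> rcases hb with rfl|rfl|rfl|rfl|rfl|rfl <;> decide
  inv_mem' := by
    intro a ha
    simp only [Uset, Set.mem_insert_iff, Set.mem_singleton_iff] at ha ⊢
    rcases ha with rfl|rfl|rfl|rfl|rfl|rfl
    · rw [inv_one]; decide
    · rw [show glP⁻¹ = glP^2 from inv_eq_of_mul_eq_one_right (by decide)]; decide
    · rw [show (glP^2)⁻¹ = glP from inv_eq_of_mul_eq_one_right (by decide)]; decide
    · rw [show glA⁻¹ = glA from inv_eq_of_mul_eq_one_right (by decide)]; decide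
    · rw [show (glP*glA)⁻¹ = glP*glA from inv_eq_of_mul_eq_one_right (by decide)]; decide
    · rw [show (glP^2*glA)⁻¹ = glP^2*glA from inv_eq_of_mul_eq_one_right (by decide)]; decide

def Vsub : Subgroup GG where
  carrier := Vset
  one_mem' := Or.inl rfl
  mul_mem' := by
    intro a b ha hb
    simp only [Vset, Set.mem_insert_iff, Set.mem_singleton_iff] at ha hb ⊢
    rcases ha with rfl|rfl|rfl|rfl|rfl|rfl <;> rcases hb with rfl|rfl|rfl|rfl|rfl|rfl <;> decide
  inv_mem' := by
    intro a ha
    simp only [Vset, Set.mem_insert_iff, Set.mem_singleton_iff] at ha ⊢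
    rcases ha with rfl|rfl|rfl|rfl|rfl|rfl
    · rw [inv_one]; decide
    · rw [show glP⁻¹ = glP^2 from inv_eq_of_mul_eq_one_right (by decide)]; decide
    · rw [show (glP^2)⁻¹ = glP from inv_eq_of_mul_eq_one_right (by decide)]; decide
    · rw [show glB⁻¹ = glB from inv_eq_of_mul_eq_one_right (by decide)]; decide
    · rw [show (glP*glB)⁻¹ = glP*glB from inv_eq_of_mul_eq_one_right (by decide)]; decide
    · rw [show (glP^2*glB)⁻¹ = glP^2*glB from inv_eq_of_mul_eq_one_right (by decide)]; decide

lemma U_eq : Subgroup.zpowers glP ⊔ Subgroup.zpowers glA = Usub := by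
  apply le_antisymm
  · exact sup_le (Subgroup.zpowers_le.2 (Or.inr (Or.inl rfl)))
      (Subgroup.zpowers_le.2 (Or.inr (Or.inr (Or.inr (Or.inl rfl)))))
  · intro x hx
    rcases hx with rfl|rfl|rfl|rfl|rfl|rfl
    · exact Subgroup.one_mem _
    · exact Subgroup.mem_sup_left (Subgroup.mem_zpowers glP)
    · exact Subgroup.mem_sup_left (Subgroup.pow_mem _ (Subgroup.mem_zpowers glP) 2)
    · exact Subgroup.mem_sup_right (Subgroup.mem_zpowers glA)
    · exact Subgroup.mul_mem _ (Subgroup.mem_sup_left (Subgroup.mem_zpowers glP))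
        (Subgroup.mem_sup_right (Subgroup.mem_zpowers glA))
    · exact Subgroup.mul_mem _ (Subgroup.mem_sup_left (Subgroup.pow_mem _ (Subgroup.mem_zpowers glP) 2))
        (Subgroup.mem_sup_right (Subgroup.mem_zpowers glA))

lemma V_eq : Subgroup.zpowers glP ⊔ Subgroup.zpowers glB = Vsub := by
  apply le_antisymm
  · exact sup_le (Subgroup.zpowers_le.2 (Or.inr (Or.inl rfl)))
      (Subgroup.zpowers_le.2 (Or.inr (Or.inr (Or.inr (Or.inl rfl)))))
  · intro x hx
    rcases hx with rfl|rfl|rfl|rfl|rfl|rfl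
    · exact Subgroup.one_mem _
    · exact Subgroup.mem_sup_left (Subgroup.mem_zpowers glP)
    · exact Subgroup.mem_sup_left (Subgroup.pow_mem _ (Subgroup.mem_zpowers glP) 2)
    · exact Subgroup.mem_sup_right (Subgroup.mem_zpowers glB)
    · exact Subgroup.mul_mem _ (Subgroup.mem_sup_left (Subgroup.mem_zpowers glP))
        (Subgroup.mem_sup_right (Subgroup.mem_zpowers glB))
    · exact Subgroup.mul_mem _ (Subgroup.mem_sup_left (Subgroup.pow_mem _ (Subgroup.mem_zpowers glP) 2))
        (Subgroup.mem_sup_right (Subgroup.mem_zpowers glB))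

lemma Ucard : Nat.card (Subgroup.zpowers glP ⊔ Subgroup.zpowers glA : Subgroup GG) = 6 := by
  rw [U_eq]
  have : Nat.card Usub = Uset.ncard := rfl
  rw [this]
  unfold Uset
  rw [Set.ncard_insert_of_notMem (by simp only [Set.mem_insert_iff, Set.mem_singleton_iff]; decide),
      Set.ncard_insert_of_notMem (by simp only [Set.mem_insert_iff, Set.mem_singleton_iff]; decide),
      Set.ncard_insert_of_notMem (by simp only [Set.mem_insert_iff, Set.mem_singleton_iff]; decide),
      Set.ncard_insert_of_notMem (by simp only [Set.mem_insert_iff, Set.mem_singleton_iff]; decide),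
      Set.ncard_insert_of_notMem (by simp only [Set.mem_singleton_iff]; decide),
      Set.ncard_singleton]

lemma Vcard : Nat.card (Subgroup.zpowers glP ⊔ Subgroup.zpowers glB : Subgroup GG) = 6 := by
  rw [V_eq]
  have : Nat.card Vsub = Vset.ncard := rfl
  rw [this]
  unfold Vset
  rw [Set.ncard_insert_of_notMem (by simp only [Set.mem_insert_iff, Set.mem_singleton_iff]; decide),
      Set.ncard_insert_of_notMem (by simp only [Set.mem_insert_iff, Set.mem_singleton_iff]; decide),
      Set.ncard_insert_of_notMem (by simp only [Set.mem_insert_iff, Set.mem_singleton_iff]; decide),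
      Set.ncard_insert_of_notMem (by simp only [Set.mem_insert_iff, Set.mem_singleton_iff]; decide),
      Set.ncard_insert_of_notMem (by simp only [Set.mem_singleton_iff]; decide),
      Set.ncard_singleton]

lemma fact2 : (6 : ℕ).factorization 2 = 1 := by
  show ((2*3 : ℕ)).factorization 2 = 1
  rw [Nat.factorization_mul (by norm_num) (by norm_num)]
  simp [Nat.Prime.factorization (by norm_num : Nat.Prime 2),
    Nat.Prime.factorization (by norm_num : Nat.Prime 3), Finsupp.single_apply]

lemma fact3 : (6 : ℕ).factorization 3 = 1 := by
  show ((2*3 : ℕ)).factorization 3 = 1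
  rw [Nat.factorization_mul (by norm_num) (by norm_num)]
  simp [Nat.Prime.factorization (by norm_num : Nat.Prime 2),
    Nat.Prime.factorization (by norm_num : Nat.Prime 3), Finsupp.single_apply]

lemma orderP : orderOf glP = 3 :=
  haveI : Fact (Nat.Prime 3) := ⟨by norm_num⟩
  orderOf_eq_prime (by decide) (by decide)

lemma orderA : orderOf glA = 2 :=
  haveI : Fact (Nat.Prime 2) := ⟨by norm_num⟩
  orderOf_eq_prime (by decide) (by decide)

lemma orderB : orderOf glB = 2 :=
  haveI : Fact (Nat.Prime 2) := ⟨by norm_num⟩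
  orderOf_eq_prime (by decide) (by decide)

lemma conjW : MulAut.conj glW glA = glB := by
  rw [MulAut.conj_apply, mul_inv_eq_iff_eq_mul]
  decide

section

variable {H : Subgroup GG}

lemma zpow_subtype (x : GG) (hx : x ∈ H) :
    (Subgroup.zpowers (⟨x, hx⟩ : H)).map H.subtype = Subgroup.zpowers x := by
  rw [MonoidHom.map_zpowers]
  rfl

end

lemma sylow_part : Subgroup.SylowConjugate
    (Subgroup.zpowers glP ⊔ Subgroup.zpowers glA)
    (Subgroup.zpowers glP ⊔ Subgroup.zpowers glB) := by
  intro p hp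
  haveI : Fact p.Prime := ⟨hp⟩
  set U := Subgroup.zpowers glP ⊔ Subgroup.zpowers glA with hUdef
  set V := Subgroup.zpowers glP ⊔ Subgroup.zpowers glB with hVdef
  have hPU : glP ∈ U := Subgroup.mem_sup_left (Subgroup.mem_zpowers glP)
  have hPV : glP ∈ V := Subgroup.mem_sup_left (Subgroup.mem_zpowers glP)
  have hAU : glA ∈ U := Subgroup.mem_sup_right (Subgroup.mem_zpowers glA)
  have hBV : glB ∈ V := Subgroup.mem_sup_right (Subgroup.mem_zpowers glB)
  by_cases hp2 : p = 2
  · subst hp2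
    refine ⟨Sylow.ofCard (Subgroup.zpowers (⟨glA, hAU⟩ : U)) ?_,
            Sylow.ofCard (Subgroup.zpowers (⟨glB, hBV⟩ : V)) ?_, ?_⟩
    · rw [Nat.card_zpowers, Ucard, fact2, pow_one]
      exact (orderOf_injective U.subtype U.subtype_injective ⟨glA, hAU⟩).symm.trans orderA
    · rw [Nat.card_zpowers, Vcard, fact2, pow_one]
      exact (orderOf_injective V.subtype V.subtype_injective ⟨glB, hBV⟩).symm.trans orderB
    · rw [Sylow.coe_ofCard, Sylow.coe_ofCard, zpow_subtype, zpow_subtype]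
      exact ⟨glW, by rw [MonoidHom.map_zpowers, MulEquiv.coe_toMonoidHom, conjW]⟩
  by_cases hp3 : p = 3
  · subst hp3
    refine ⟨Sylow.ofCard (Subgroup.zpowers (⟨glP, hPU⟩ : U)) ?_,
            Sylow.ofCard (Subgroup.zpowers (⟨glP, hPV⟩ : V)) ?_, ?_⟩
    · rw [Nat.card_zpowers, Ucard, fact3, pow_one]
      exact (orderOf_injective U.subtype U.subtype_injective ⟨glP, hPU⟩).symm.trans orderP
    · rw [Nat.card_zpowers, Vcard, fact3, pow_one]
      exact (orderOf_injective V.subtype V.subtype_injective ⟨glP, hPV⟩).symm.trans orderP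
    · rw [Sylow.coe_ofCard, Sylow.coe_ofCard, zpow_subtype, zpow_subtype]
      exact Subgroup.isConjugate_refl _
  · have hnd : ¬ p ∣ 6 := by
      intro h
      rcases (Nat.Prime.dvd_mul hp).1 (show p ∣ 2 * 3 from h) with h'|h'
      · exact hp2 ((Nat.prime_dvd_prime_iff_eq hp (by norm_num)).1 h')
      · exact hp3 ((Nat.prime_dvd_prime_iff_eq hp (by norm_num)).1 h')
    refine ⟨Sylow.ofCard ⊥ ?_, Sylow.ofCard ⊥ ?_, ?_⟩
    · rw [Subgroup.card_bot, Ucard, Nat.factorization_eq_zero_of_not_dvd hnd, pow_zero]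
    · rw [Subgroup.card_bot, Vcard, Nat.factorization_eq_zero_of_not_dvd hnd, pow_zero]
    · rw [Sylow.coe_ofCard, Sylow.coe_ofCard, Subgroup.map_bot, Subgroup.map_bot]
      exact Subgroup.isConjugate_refl _

def fixE1 : Subgroup GG where
  carrier := {m : GG | (m : Matrix (Fin 2) (Fin 2) (ZMod 3)).mulVec ![1, 0] = ![1, 0]}
  one_mem' := by
    show ((1 : GG) : Matrix (Fin 2) (Fin 2) (ZMod 3)).mulVec ![1, 0] = ![1, 0]
    simp
  mul_mem' := by
    intro a b ha hb
    show ((a * b : GG) : Matrix (Fin 2) (Fin 2) (ZMod 3)).mulVec ![1, 0] = ![1, 0]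
    rw [Units.val_mul, ← Matrix.mulVec_mulVec, hb, ha]
  inv_mem' := by
    intro a ha
    show ((a⁻¹ : GG) : Matrix (Fin 2) (Fin 2) (ZMod 3)).mulVec ![1, 0] = ![1, 0]
    conv_lhs => rw [← ha]
    rw [Matrix.mulVec_mulVec, ← Units.val_mul, inv_mul_cancel, Units.val_one, Matrix.one_mulVec]

lemma not_conj : ¬ Subgroup.IsConjugate
    (Subgroup.zpowers glP ⊔ Subgroup.zpowers glA)
    (Subgroup.zpowers glP ⊔ Subgroup.zpowers glB) := by
  rintro ⟨g, hg⟩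
  set v : Fin 2 → ZMod 3 := (g : Matrix (Fin 2) (Fin 2) (ZMod 3)).mulVec ![1, 0] with hv
  have hUfix : Subgroup.zpowers glP ⊔ Subgroup.zpowers glA ≤ fixE1 :=
    sup_le
      (Subgroup.zpowers_le.2
        (show (glP : Matrix (Fin 2) (Fin 2) (ZMod 3)).mulVec ![1, 0] = ![1, 0] by decide))
      (Subgroup.zpowers_le.2
        (show (glA : Matrix (Fin 2) (Fin 2) (ZMod 3)).mulVec ![1, 0] = ![1, 0] by decide))
  have key : ∀ x : GG, x ∈ (Subgroup.zpowers glP ⊔ Subgroup.zpowers glB) →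
      (x : Matrix (Fin 2) (Fin 2) (ZMod 3)).mulVec v = v := by
    intro x hx
    rw [← hg] at hx
    obtain ⟨u, hu, rfl⟩ := Subgroup.mem_map.1 hx
    have h1 : (u : Matrix (Fin 2) (Fin 2) (ZMod 3)).mulVec ![1, 0] = ![1, 0] := hUfix hu
    show ((g * u * g⁻¹ : GG) : Matrix (Fin 2) (Fin 2) (ZMod 3)).mulVec
      ((g : Matrix (Fin 2) (Fin 2) (ZMod 3)).mulVec ![1, 0]) =
      (g : Matrix (Fin 2) (Fin 2) (ZMod 3)).mulVec ![1, 0]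
    rw [Matrix.mulVec_mulVec, ← Units.val_mul, show g * u * g⁻¹ * g = g * u by group,
      Units.val_mul, ← Matrix.mulVec_mulVec, h1]
  have hPfix := key glP (Subgroup.mem_sup_left (Subgroup.mem_zpowers glP))
  have hBfix := key glB (Subgroup.mem_sup_right (Subgroup.mem_zpowers glB))
  have hPval : (glP : Matrix (Fin 2) (Fin 2) (ZMod 3)) = !![1, 1; 0, 1] := rfl
  have hBval : (glB : Matrix (Fin 2) (Fin 2) (ZMod 3)) = !![-1, 0; 0, 1] := rfl
  rw [hPval] at hPfix
  rw [hBval] at hBfix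
  have e0 := congrFun hPfix 0
  have e1 := congrFun hBfix 0
  simp [Matrix.mulVec, dotProduct, Fin.sum_univ_two] at e0 e1
  have hv1 : v 1 = 0 := by linear_combination e0
  have hv0 : v 0 = 0 := by
    have h3 : (3 : ZMod 3) = 0 := by decide
    linear_combination e1 + v 0 * h3
  have hvz : v = 0 := by
    funext i
    fin_cases i
    · exact hv0
    · exact hv1
  have hcontra : ((1 : GG) : Matrix (Fin 2) (Fin 2) (ZMod 3)).mulVec ![1, 0] = 0 := by
    rw [← inv_mul_cancel g, Units.val_mul, ← Matrix.mulVec_mulVec, ← hv, hvz, Matrix.mulVec_zero]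
  rw [Units.val_one, Matrix.one_mulVec] at hcontra
  exact absurd (congrFun hcontra 0) (by decide)

theorem GL2F3_sylowConjugate_not_conjugate :
    Subgroup.SylowConjugate
        (Subgroup.zpowers glP ⊔ Subgroup.zpowers glA)
        (Subgroup.zpowers glP ⊔ Subgroup.zpowers glB) ∧
      ¬ Subgroup.IsConjugate
        (Subgroup.zpowers glP ⊔ Subgroup.zpowers glA)
        (Subgroup.zpowers glP ⊔ Subgroup.zpowers glB) :=
  ⟨sylow_part, not_conj⟩
end

section
/- Let G be a finite nilpotent group and let U and V be Sylow-conjugate subgroups of G. Then U and V are conjugate in G. -/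
open Subgroup

section Aux

variable {G : Type*} [Group G]

/-- The chosen Sylow `p`-subgroup of `G`, as a subgroup. -/
noncomputable def sylG (G : Type*) [Group G] (p : ℕ) : Subgroup G :=
  ((default : Sylow p G) : Subgroup G)

lemma sylG_isPGroup (p : ℕ) : IsPGroup p (sylG G p) := Sylow.isPGroup' _

/-- Conjugation by a centralizing element fixes a subgroup. -/
lemma map_conj_eq_of_centralizer {c : G} {S T : Subgroup G}
    (hc : c ∈ Subgroup.centralizer (T : Set G)) (hS : S ≤ T) :
    S.map (MulAut.conj c).toMonoidHom = S := by
  have key : ∀ y ∈ S, (MulAut.conj c).toMonoidHom y = y := by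
    intro y hy
    have := Subgroup.mem_centralizer_iff.mp hc y (hS hy)
    simp only [MulEquiv.coe_toMonoidHom, MulAut.conj_apply]
    rw [mul_inv_eq_iff_eq_mul, this]
  ext x
  constructor
  · rintro ⟨y, hy, rfl⟩
    rwa [key y hy]
  · intro hx
    exact ⟨x, hx, key x hx⟩

lemma map_conj_mul (a c : G) (S : Subgroup G) :
    S.map (MulAut.conj (a * c)).toMonoidHom
      = (S.map (MulAut.conj c).toMonoidHom).map (MulAut.conj a).toMonoidHom := by
  rw [Subgroup.map_map]
  congr 1
  ext x
  simp [mul_assoc]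

variable [Finite G] [Group.IsNilpotent G]

lemma sylow_normal {p : ℕ} [Fact p.Prime] (P : Sylow p G) : (P : Subgroup G).Normal :=
  Sylow.normal_of_normalizerCondition (normalizerCondition_of_isNilpotent) P

lemma sylG_normal (p : ℕ) [Fact p.Prime] : (sylG G p).Normal := sylow_normal _

lemma le_sylG {p : ℕ} [Fact p.Prime] {H : Subgroup G} (hH : IsPGroup p H) : H ≤ sylG G p := by
  obtain ⟨Q, hQ⟩ := hH.exists_le_sylow
  haveI := Sylow.unique_of_normal Q (sylow_normal Q)
  have hq : Q = (default : Sylow p G) := Subsingleton.elim _ _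
  rw [sylG, ← hq]
  exact hQ

lemma sylG_le_centralizer {p q : ℕ} [Fact p.Prime] [Fact q.Prime] (hpq : q ≠ p) :
    sylG G q ≤ Subgroup.centralizer (sylG G p : Set G) := by
  intro x hx
  rw [Subgroup.mem_centralizer_iff]
  intro y hy
  exact (Subgroup.commute_of_normal_of_disjoint _ _ (sylG_normal q) (sylG_normal p)
    (IsPGroup.disjoint_of_ne q p hpq _ _ (sylG_isPGroup q) (sylG_isPGroup p)) x y hx hy).symm

/-- The image in `G` of any Sylow `p`-subgroup of `U` is `U ⊓ sylG G p`. -/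
lemma map_sylow_eq {p : ℕ} [Fact p.Prime] (U : Subgroup G) (P : Sylow p U) :
    (P : Subgroup U).map U.subtype = U ⊓ sylG G p := by
  have hle : (P : Subgroup U).map U.subtype ≤ U ⊓ sylG G p :=
    le_inf (map_subtype_le _) (le_sylG (P.isPGroup'.map _))
  have h1 : (P : Subgroup U) ≤ (U ⊓ sylG G p).comap U.subtype :=
    map_le_iff_le_comap.mp hle
  have h2 : IsPGroup p ((U ⊓ sylG G p).comap U.subtype) :=
    IsPGroup.comap_of_injective (IsPGroup.to_inf_right (H := U) (sylG_isPGroup p)) U.subtype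
      Subtype.coe_injective
  have h3 := P.is_maximal' h2 h1
  calc (P : Subgroup U).map U.subtype
      = ((U ⊓ sylG G p).comap U.subtype).map U.subtype := by rw [h3]
    _ = U.subtype.range ⊓ (U ⊓ sylG G p) := map_comap_eq _ _
    _ = U ⊓ sylG G p := by rw [range_subtype, ← inf_assoc, inf_idem]

/-- Every subgroup of a finite nilpotent group is the join of its intersections with
the Sylow subgroups. -/
lemma eq_iSup_inf_sylG (U : Subgroup G) :
    U = ⨆ p ∈ (Nat.card G).primeFactors, U ⊓ sylG G p := by
  set T := ⨆ p ∈ (Nat.card G).primeFactors, U ⊓ sylG G p with hT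
  have hle : T ≤ U := iSup_le fun p => iSup_le fun _ => inf_le_left
  have hcardG : Nat.card G ≠ 0 := Nat.card_pos.ne'
  have hcardU : Nat.card U ≠ 0 := Nat.card_pos.ne'
  have hcardT : Nat.card T ≠ 0 := Nat.card_pos.ne'
  have hdvd : Nat.card U ∣ Nat.card T := by
    rw [← Nat.factorization_le_iff_dvd hcardU hcardT]
    intro p
    by_cases hp0 : (Nat.card U).factorization p = 0
    · simp [hp0]
    have hp : p.Prime := Nat.prime_of_mem_primeFactors
      (Nat.support_factorization _ ▸ Finsupp.mem_support_iff.mpr hp0)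
    haveI := Fact.mk hp
    have hpU : p ∣ Nat.card U := by
      have := Nat.support_factorization _ ▸ Finsupp.mem_support_iff.mpr hp0
      exact Nat.dvd_of_mem_primeFactors this
    have hpG : p ∈ (Nat.card G).primeFactors :=
      Nat.mem_primeFactors.mpr ⟨hp, hpU.trans U.card_subgroup_dvd_card, hcardG⟩
    set P : Sylow p U := default
    have hcardP : Nat.card P = p ^ (Nat.card U).factorization p :=
      Sylow.card_eq_multiplicity P
    have hmap : (P : Subgroup U).map U.subtype ≤ T :=
      (map_sylow_eq U P).le.trans (le_iSup_of_le p (le_iSup_of_le hpG le_rfl))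
    have hcardmap : Nat.card ((P : Subgroup U).map U.subtype) = Nat.card P :=
      (Nat.card_congr (Subgroup.equivMapOfInjective _ _ Subtype.coe_injective).toEquiv).symm
    have : p ^ (Nat.card U).factorization p ∣ Nat.card T := by
      rw [← hcardP, ← hcardmap]
      exact Subgroup.card_dvd_of_le hmap
    exact (Nat.Prime.pow_dvd_iff_le_factorization hp hcardT).mp this
  exact ((Subgroup.eq_of_le_of_card_ge hle (Nat.le_of_dvd Nat.card_pos hdvd))).symm

/-- The Sylow subgroups generate `G`. -/
lemma iSup_sylG_eq_top : (⨆ p ∈ (Nat.card G).primeFactors, sylG G p) = ⊤ := by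
  have := (eq_iSup_inf_sylG (G := G) ⊤).symm
  simpa using this


/-- A conjugating element for subgroups of `sylG G p` can be chosen inside `sylG G p`. -/
lemma exists_conj_in_sylG {p : ℕ} [Fact p.Prime] {S S' : Subgroup G}
    (hS : S ≤ sylG G p) (g : G) (hg : S.map (MulAut.conj g).toMonoidHom = S') :
    ∃ a ∈ sylG G p, S.map (MulAut.conj a).toMonoidHom = S' := by
  have htop : sylG G p ⊔ Subgroup.centralizer (sylG G p : Set G) = ⊤ := by
    rw [← top_le_iff, ← iSup_sylG_eq_top (G := G)]
    refine iSup_le fun q => iSup_le fun hq => ?_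
    haveI := Fact.mk (Nat.prime_of_mem_primeFactors hq)
    rcases eq_or_ne q p with rfl | hqp
    · exact le_sup_left
    · exact (sylG_le_centralizer hqp).trans le_sup_right
  have hg' : g ∈ sylG G p ⊔ Subgroup.centralizer (sylG G p : Set G) := htop ▸ mem_top g
  haveI : (sylG G p).Normal := sylG_normal p
  rw [← SetLike.mem_coe, Subgroup.normal_mul] at hg'
  obtain ⟨a, ha, c, hc, rfl⟩ := hg'
  refine ⟨a, ha, ?_⟩
  rw [map_conj_mul, map_conj_eq_of_centralizer hc hS] at hg
  exact hg

end Aux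

theorem nilpotent_sylowConjugate_imp_conjugate
    {G : Type*} [Group G] [Finite G] [Group.IsNilpotent G] (U V : Subgroup G)
    (h : Subgroup.SylowConjugate U V) :
    Subgroup.IsConjugate U V := by
  classical
  set ps := (Nat.card G).primeFactors with hps
  have key : ∀ p ∈ ps, ∃ a ∈ sylG G p,
      (U ⊓ sylG G p).map (MulAut.conj a).toMonoidHom = V ⊓ sylG G p := by
    intro p hp
    haveI := Fact.mk (Nat.prime_of_mem_primeFactors hp)
    obtain ⟨P, Q, g, hg⟩ := h p (Nat.prime_of_mem_primeFactors hp)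
    rw [map_sylow_eq U P, map_sylow_eq V Q] at hg
    exact exists_conj_in_sylG inf_le_right g hg
  choose a ha hconj using key
  have main : ∀ s : Finset ℕ, s ⊆ ps → ∃ g ∈ ⨆ q ∈ s, sylG G q,
      ∀ q ∈ s, (U ⊓ sylG G q).map (MulAut.conj g).toMonoidHom = V ⊓ sylG G q := by
    intro s
    induction s using Finset.induction_on with
    | empty => exact fun _ => ⟨1, one_mem _, fun q hq => absurd hq (by simp)⟩
    | @insert p s hpnot ih =>
      intro hsub
      have hp : p ∈ ps := hsub (Finset.mem_insert_self p s)
      haveI := Fact.mk (Nat.prime_of_mem_primeFactors hp)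
      obtain ⟨g, hgmem, hgconj⟩ := ih fun q hq => hsub (Finset.mem_insert_of_mem hq)
      refine ⟨a p hp * g, ?_, ?_⟩
      · refine Subgroup.mul_mem _ ?_ ?_
        · have hle : sylG G p ≤ ⨆ q ∈ insert p s, sylG G q :=
            le_biSup _ (Finset.mem_insert_self p s)
          exact hle (ha p hp)
        · have hle : (⨆ q ∈ s, sylG G q) ≤ ⨆ q ∈ insert p s, sylG G q :=
            biSup_mono (fun q hq => Finset.mem_insert_of_mem hq)
          exact hle hgmem
      · intro q hq
        rcases Finset.mem_insert.mp hq with rfl | hqs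
        · -- q = p
          have hgc : g ∈ Subgroup.centralizer (sylG G q : Set G) := by
            have hle : (⨆ r ∈ s, sylG G r) ≤ Subgroup.centralizer (sylG G q : Set G) := by
              refine iSup_le fun r => iSup_le fun hr => ?_
              haveI := Fact.mk (Nat.prime_of_mem_primeFactors
                (hsub (Finset.mem_insert_of_mem hr)))
              exact sylG_le_centralizer (by rintro rfl; exact hpnot hr)
            exact hle hgmem
          rw [map_conj_mul, map_conj_eq_of_centralizer hgc inf_le_right]
          exact hconj q hp
        · haveI := Fact.mk (Nat.prime_of_mem_primeFactors (hsub (Finset.mem_insert_of_mem hqs)))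
          have hac : a p hp ∈ Subgroup.centralizer (sylG G q : Set G) :=
            sylG_le_centralizer (by rintro rfl; exact hpnot hqs) (ha p hp)
          have := hgconj q hqs
          rw [map_conj_mul, this, map_conj_eq_of_centralizer hac inf_le_right]
  obtain ⟨g, _, hgconj⟩ := main ps le_rfl
  refine ⟨g, ?_⟩
  conv_lhs => rw [eq_iSup_inf_sylG (G := G) U]
  conv_rhs => rw [eq_iSup_inf_sylG (G := G) V]
  rw [Subgroup.map_iSup]
  refine iSup_congr fun p => ?_
  rw [Subgroup.map_iSup]
  exact iSup_congr fun hp => hgconj p hp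
end

section
/- Let M be a number field such that M/ℚ is a Galois extension whose Galois group G = Gal(M/ℚ) is nilpotent, and let K and L be intermediate fields of M/ℚ whose fixing subgroups Gal(M/K) and Gal(M/L) are Sylow-conjugate in G. Then K and L are isomorphic as fields. -/
open Subgroup Pointwise in

theorem aux_sup_eq {G : Type*} [Group G] [Finite G] (W : Subgroup G) (s : Finset ℕ)
    (hs : (Nat.card W).primeFactors ⊆ s) (T : ℕ → Subgroup G)
    (hle : ∀ p ∈ s, T p ≤ W)
    (hcard : ∀ p ∈ s, Nat.card (T p) = p ^ (Nat.card W).factorization p) :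
    (⨆ p ∈ s, T p) = W := by
  have hSW : (⨆ p ∈ s, T p) ≤ W := iSup₂_le hle
  have hW0 : Nat.card W ≠ 0 := Nat.card_pos.ne'
  have hS0 : Nat.card (⨆ p ∈ s, T p : Subgroup G) ≠ 0 := Nat.card_pos.ne'
  refine (Subgroup.eq_of_le_of_card_ge hSW (Nat.le_of_dvd Nat.card_pos ?_))
  rw [← Nat.factorization_le_iff_dvd hW0 hS0, Finsupp.le_def]
  intro p
  by_cases hp : p ∈ (Nat.card W).primeFactors
  · have hpp : p.Prime := Nat.prime_of_mem_primeFactors hp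
    have hps : p ∈ s := hs hp
    have h1 : p ^ (Nat.card W).factorization p ∣ Nat.card (⨆ p ∈ s, T p : Subgroup G) := by
      rw [← hcard p hps]
      exact Subgroup.card_dvd_of_le (le_biSup T hps)
    exact (hpp.pow_dvd_iff_le_factorization hS0).mp h1
  · have : (Nat.card W).factorization p = 0 := by
      by_contra h0; exact hp ((Nat.support_factorization _) ▸ Finsupp.mem_support_iff.mpr h0)
    simp [this]

theorem aux_map_conj_congr {G : Type*} [Group G] {g₁ g₂ : G} {H : Subgroup G}
    (h : ∀ x ∈ H, g₁ * x * g₁⁻¹ = g₂ * x * g₂⁻¹) :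
    Subgroup.map (MulAut.conj g₁).toMonoidHom H = Subgroup.map (MulAut.conj g₂).toMonoidHom H := by
  ext y
  simp only [Subgroup.mem_map, MulEquiv.coe_toMonoidHom, MulAut.conj_apply]
  constructor <;> rintro ⟨x, hx, rfl⟩
  · exact ⟨x, hx, (h x hx).symm⟩
  · exact ⟨x, hx, h x hx⟩

open Subgroup Pointwise in
theorem aux_isConjugate {G : Type*} [Group G] [Finite G] [Group.IsNilpotent G]
    (U V : Subgroup G) (h : U.SylowConjugate V) : U.IsConjugate V := by
  classical
  have hnorm : ∀ (p : ℕ) (_hp : Fact p.Prime) (P : Sylow p G), (P : Subgroup G).Normal := by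
    have htfae := (isNilpotent_of_finite_tfae (G := G)).out 0 3
    exact htfae.mp ‹_›
  set s := (Nat.card G).primeFactors with hs
  -- key choice
  have key : ∀ p : ℕ, ∃ (A B C : Subgroup G) (g : G), C.Normal ∧ IsPGroup p C ∧
      (p ∈ s → A ≤ U ∧ B ≤ V ∧ A ≤ C ∧ B ≤ C ∧
        Nat.card A = p ^ (Nat.card U).factorization p ∧
        Nat.card B = p ^ (Nat.card V).factorization p ∧
        Nat.card C = p ^ (Nat.card G).factorization p ∧
        Subgroup.map (MulAut.conj g).toMonoidHom A = B) := by
    intro p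
    by_cases hmem : p ∈ s
    · haveI hpf : Fact p.Prime := ⟨Nat.prime_of_mem_primeFactors hmem⟩
      obtain ⟨P₀, Q₀, g₀, hg₀⟩ := h p hpf.out
      set A := (P₀ : Subgroup U).map U.subtype with hA
      set B := (Q₀ : Subgroup V).map V.subtype with hB
      have hApg : IsPGroup p A := P₀.isPGroup'.map _
      obtain ⟨R, hR⟩ := hApg.exists_le_sylow
      haveI hRn : (R : Subgroup G).Normal := hnorm p hpf R
      have hBR : B ≤ (R : Subgroup G) := by
        rw [← hg₀]
        have : Subgroup.map (MulAut.conj g₀).toMonoidHom (R : Subgroup G) = R := by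
          have := Subgroup.Normal.conj_smul_eq_self g₀ (R : Subgroup G)
          rwa [Subgroup.pointwise_smul_def] at this
        calc Subgroup.map (MulAut.conj g₀).toMonoidHom A
            ≤ Subgroup.map (MulAut.conj g₀).toMonoidHom (R : Subgroup G) :=
              Subgroup.map_mono hR
          _ = R := this
      have hcardA : Nat.card A = p ^ (Nat.card U).factorization p := by
        rw [← Sylow.card_eq_multiplicity P₀]
        exact (Nat.card_congr (Subgroup.equivMapOfInjective _ _ U.subtype_injective).toEquiv).symm
      have hcardB : Nat.card B = p ^ (Nat.card V).factorization p := by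
        rw [← Sylow.card_eq_multiplicity Q₀]
        exact (Nat.card_congr (Subgroup.equivMapOfInjective _ _ V.subtype_injective).toEquiv).symm
      exact ⟨A, B, R, g₀, hRn, R.isPGroup', fun _ =>
        ⟨Subgroup.map_subtype_le _, Subgroup.map_subtype_le _, hR, hBR, hcardA, hcardB,
          Sylow.card_eq_multiplicity R, hg₀⟩⟩
    · exact ⟨⊥, ⊥, ⊥, 1, inferInstance, IsPGroup.of_bot, fun hm => absurd hm hmem⟩
  choose P Q Gp g hGN hGpg hrest using key
  have hdisj : ∀ p q, p ∈ s → q ∈ s → p ≠ q → ∀ x ∈ Gp p, ∀ y ∈ Gp q, Commute x y := by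
    intro p q hp hq hne x hx y hy
    haveI : Fact p.Prime := ⟨Nat.prime_of_mem_primeFactors hp⟩
    haveI : Fact q.Prime := ⟨Nat.prime_of_mem_primeFactors hq⟩
    exact Subgroup.commute_of_normal_of_disjoint _ _ (hGN p) (hGN q)
      (IsPGroup.disjoint_of_ne p q hne _ _ (hGpg p) (hGpg q)) x y hx hy
  have hU : (⨆ p ∈ s, P p) = U := by
    refine aux_sup_eq U s ?_ P (fun p hp => ((hrest p hp).1)) (fun p hp => ((hrest p hp).2.2.2.2.1))
    exact Nat.primeFactors_mono (Subgroup.card_subgroup_dvd_card U) Nat.card_pos.ne'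
  have hV : (⨆ p ∈ s, Q p) = V := by
    refine aux_sup_eq V s ?_ Q (fun p hp => ((hrest p hp).2.1)) (fun p hp => ((hrest p hp).2.2.2.2.2.1))
    exact Nat.primeFactors_mono (Subgroup.card_subgroup_dvd_card V) Nat.card_pos.ne'
  have hT : (⨆ p ∈ s, Gp p) = ⊤ := by
    refine aux_sup_eq ⊤ s ?_ Gp (fun p hp => le_top) (fun p hp => ?_)
    · rw [Subgroup.card_top]
    · rw [Subgroup.card_top]
      exact (hrest p hp).2.2.2.2.2.2.1
  -- the conjugating elements, inside Gp p
  have key2 : ∀ p : ℕ, ∃ a : G, p ∈ s →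
      a ∈ Gp p ∧ Subgroup.map (MulAut.conj a).toMonoidHom (P p) = Q p := by
    intro p
    by_cases hmem : p ∈ s
    · obtain ⟨hPU, hQV, hPG, hQG, hcA, hcB, hcC, hconj⟩ := hrest p hmem
      haveI := hGN p
      have hgmem : g p ∈ (⨆ q ∈ (s.erase p), Gp q) ⊔ Gp p := by
        have h1 : (⨆ q ∈ s, Gp q) = (⨆ q ∈ (s.erase p), Gp q) ⊔ Gp p := by
          conv_lhs => rw [← Finset.insert_erase hmem]
          rw [Finset.iSup_insert, sup_comm]
        rw [← h1, hT]
        exact Subgroup.mem_top _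
      have hC : (⨆ q ∈ (s.erase p), Gp q) ≤ Subgroup.centralizer (Gp p : Set G) := by
        refine iSup₂_le fun q hq => ?_
        intro y hy
        refine Subgroup.mem_centralizer_iff.mpr fun x hx => ?_
        exact hdisj p q hmem (Finset.mem_of_mem_erase hq)
          (Ne.symm (Finset.ne_of_mem_erase hq)) x hx y hy
      have hmul := Subgroup.mul_normal (⨆ q ∈ (s.erase p), Gp q) (Gp p)
      have : (g p : G) ∈ ((⨆ q ∈ (s.erase p), Gp q : Subgroup G) : Set G) * (Gp p : Set G) := by
        rw [← hmul]; exact hgmem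
      obtain ⟨b, hb, a, ha, hba⟩ := Set.mem_mul.mp this
      refine ⟨a, fun _ => ⟨ha, ?_⟩⟩
      rw [← hconj]
      refine aux_map_conj_congr fun x hx => ?_
      have hxG : x ∈ Gp p := hPG hx
      have hbc : b ∈ Subgroup.centralizer (Gp p : Set G) := hC hb
      have hax : a * x * a⁻¹ ∈ Gp p := mul_mem (mul_mem ha hxG) (inv_mem ha)
      have hcomm := Subgroup.mem_centralizer_iff.mp hbc _ hax
      rw [← hba]
      symm
      calc b * a * x * (b * a)⁻¹ = (b * (a * x * a⁻¹)) * b⁻¹ := by group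
        _ = ((a * x * a⁻¹) * b) * b⁻¹ := by rw [← hcomm]
        _ = a * x * a⁻¹ := by group
    · exact ⟨1, fun hm => absurd hm hmem⟩
  choose a ha using key2
  have hcomm : (↑s : Set ℕ).Pairwise (Function.onFun Commute a) := by
    intro p hp q hq hne
    exact hdisj p q hp hq hne (a p) ((ha p hp).1) (a q) ((ha q hq).1)
  refine ⟨s.noncommProd a hcomm, ?_⟩
  rw [← hU, ← hV]
  have hmaps : ∀ p ∈ s,
      Subgroup.map (MulAut.conj (s.noncommProd a hcomm)).toMonoidHom (P p) = Q p := by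
    intro p hp
    obtain ⟨haG, hmap⟩ := ha p hp
    have hprod := Finset.noncommProd_erase_mul s hp a hcomm
    set c := (s.erase p).noncommProd a (fun _ hx _ hy hxy ↦ hcomm (s.mem_of_mem_erase hx) (s.mem_of_mem_erase hy) hxy) with hc
    have hcc : c ∈ Subgroup.centralizer (Gp p : Set G) := by
      refine Subgroup.noncommProd_mem _ _ fun q hq => ?_
      refine Subgroup.mem_centralizer_iff.mpr fun x hx => ?_
      exact hdisj p q hp (Finset.mem_of_mem_erase hq) (Ne.symm (Finset.ne_of_mem_erase hq))
        x hx (a q) ((ha q (Finset.mem_of_mem_erase hq)).1)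
    rw [← hmap]
    refine aux_map_conj_congr fun x hx => ?_
    have hxG : x ∈ Gp p := ((hrest p hp).2.2.1) hx
    have hax : a p * x * (a p)⁻¹ ∈ Gp p := mul_mem (mul_mem haG hxG) (inv_mem haG)
    have hcomm2 := Subgroup.mem_centralizer_iff.mp hcc _ hax
    rw [← hprod]
    calc (c * a p) * x * (c * a p)⁻¹ = (c * (a p * x * (a p)⁻¹)) * c⁻¹ := by group
      _ = ((a p * x * (a p)⁻¹) * c) * c⁻¹ := by rw [← hcomm2]
      _ = a p * x * (a p)⁻¹ := by group
  calc Subgroup.map (MulAut.conj (s.noncommProd a hcomm)).toMonoidHom (⨆ p ∈ s, P p)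
      = ⨆ p ∈ s, Subgroup.map (MulAut.conj (s.noncommProd a hcomm)).toMonoidHom (P p) := by
        simp only [Subgroup.map_iSup]
    _ = ⨆ p ∈ s, Q p := biSup_congr hmaps

open Subgroup in

theorem aux_fixingSubgroup_map {M : Type*} [Field M] [Algebra ℚ M]
    (K : IntermediateField ℚ M) (σ : M ≃ₐ[ℚ] M) :
    (K.map (σ : M →ₐ[ℚ] M)).fixingSubgroup
      = Subgroup.map (MulAut.conj σ).toMonoidHom K.fixingSubgroup := by
  ext τ
  simp only [IntermediateField.fixingSubgroup, mem_fixingSubgroup_iff, Subgroup.mem_map,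
    MulEquiv.coe_toMonoidHom, MulAut.conj_apply]
  constructor
  · intro hτ
    refine ⟨σ⁻¹ * τ * σ, fun x hx => ?_, by group⟩
    have hx' : (σ x : M) ∈ (K.map (σ : M →ₐ[ℚ] M) : Set M) := ⟨x, hx, rfl⟩
    have := hτ _ hx'
    show σ⁻¹ (τ (σ x)) = x
    rw [show τ (σ x) = σ x from this]
    exact σ.symm_apply_apply x
  · rintro ⟨u, hu, rfl⟩
    rintro y ⟨x, hx, rfl⟩
    show σ (u (σ⁻¹ (σ x))) = σ x
    rw [show (σ⁻¹ (σ x) : M) = x from σ.symm_apply_apply x]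
    rw [show u x = x from hu x hx]

theorem nilpotent_galois_sylowConjugate_imp_isomorphic
    {M : Type*} [Field M] [NumberField M] [IsGalois ℚ M]
    [Group.IsNilpotent (M ≃ₐ[ℚ] M)]
    (K L : IntermediateField ℚ M)
    (h : Subgroup.SylowConjugate K.fixingSubgroup L.fixingSubgroup) :
    Nonempty (K ≃+* L) := by
  obtain ⟨σ, hσ⟩ := aux_isConjugate _ _ h
  have h1 : (K.map (σ : M →ₐ[ℚ] M)).fixingSubgroup = L.fixingSubgroup := by
    rw [aux_fixingSubgroup_map, hσ]
  have h2 : K.map (σ : M →ₐ[ℚ] M) = L := by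
    have h3 := congrArg IntermediateField.fixedField h1
    rwa [IsGalois.fixedField_fixingSubgroup, IsGalois.fixedField_fixingSubgroup] at h3
  exact ⟨((IntermediateField.equivMap K (σ : M →ₐ[ℚ] M)).trans
    (IntermediateField.equivOfEq h2)).toRingEquiv⟩
end

section
/- Let G be a finite group with an abelian normal subgroup A and a complement H of A in G (so G = A ⋊ H), and suppose A is irreducible as an H-module, i.e., the only subgroups of A normalized by H are the trivial subgroup and A itself. If U and V are complements of A in G that are Sylow-conjugate in G, then U and V are conjugate in G. -/
open Subgroup
open scoped IsMulCommutative

private lemma map_conj_map_conj {G : Type*} [Group G] (g h : G) (K : Subgroup G) :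
    Subgroup.map (MulAut.conj g).toMonoidHom (Subgroup.map (MulAut.conj h).toMonoidHom K)
      = Subgroup.map (MulAut.conj (g * h)).toMonoidHom K := by
  rw [Subgroup.map_map]
  congr 1
  ext x
  simp [MulAut.conj]
  group

private lemma map_conj_card {G : Type*} [Group G] (g : G) (K : Subgroup G) :
    Nat.card (Subgroup.map (MulAut.conj g).toMonoidHom K) = Nat.card K :=
  (Nat.card_congr (K.equivMapOfInjective _ ((MulAut.conj g).injective)).toEquiv).symm

private lemma map_conj_normal {G : Type*} [Group G] (g : G) (A : Subgroup G) [hA : A.Normal] :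
    Subgroup.map (MulAut.conj g).toMonoidHom A = A := by
  ext x
  simp only [Subgroup.mem_map, MulEquiv.coe_toMonoidHom, MulAut.conj_apply]
  constructor
  · rintro ⟨a, ha, rfl⟩
    exact hA.conj_mem a ha g
  · intro hx
    exact ⟨g⁻¹ * x * g, by simpa using hA.conj_mem x hx g⁻¹, by group⟩

/-- The key conjugacy lemma: if `V` is a complement of an abelian normal subgroup `A` of
exponent dividing a prime `p`, and `W, V` share a subgroup `P` whose index in `W` is prime
to `p`, and `W, V` have the same cardinality, then some element of `A` conjugates `W` to `V`. -/
private lemma key_conj {G : Type*} [Group G] [Finite G] (A W V P : Subgroup G)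
    [A.Normal] [IsMulCommutative A]
    {p : ℕ} (hp : p.Prime) (hexp : ∀ a ∈ A, a ^ p = 1)
    (hV : A.IsComplement' V)
    (hPW : P ≤ W) (hPV : P ≤ V)
    (hn : ¬ p ∣ (P.subgroupOf W).index)
    (hcard : Nat.card W = Nat.card V) :
    ∃ b ∈ A, Subgroup.map (MulAut.conj b).toMonoidHom W = V := by
  classical
  -- the "cocycle" of the complement V
  let F : G → A := fun x => ⟨((hV.equiv x).1 : G), (hV.equiv x).1.2⟩
  have hFβ : ∀ x : G, (F x : G) * ((hV.equiv x).2 : G) = x := fun x => hV.equiv_fst_mul_equiv_snd x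
  have hβV : ∀ x : G, ((hV.equiv x).2 : G) ∈ V := fun x => (hV.equiv x).2.2
  have hcoc : ∀ x y : G, F (x * y) = F x * MulAut.conjNormal x (F y) := by
    intro x y
    have hmemA : x * (F y : G) * x⁻¹ ∈ A := Subgroup.Normal.conj_mem ‹A.Normal› _ (F y).2 x
    have h1 : x * y = (x * (F y : G) * x⁻¹) * (x * ((hV.equiv y).2 : G)) := by
      conv_lhs => rw [← hFβ y]
      group
    apply Subtype.ext
    show ((hV.equiv (x*y)).1 : G) = _
    rw [h1, hV.equiv_mul_left_of_mem hmemA, hV.equiv_mul_right_of_mem (hβV y)]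
    push_cast
    rw [MulAut.conjNormal_apply]
    exact mul_comm_of_mem_isMulCommutative A hmemA (F x).2
  have hconst : ∀ (x k : G), k ∈ V → F (x * k) = F x := by
    intro x k hk
    apply Subtype.ext
    show ((hV.equiv (x * k)).1 : G) = ((hV.equiv x).1 : G)
    rw [hV.equiv_mul_right_of_mem hk]
  have hFp : ∀ x : G, F x ^ p = 1 := by
    intro x
    apply Subtype.ext
    push_cast
    exact hexp _ (F x).2
  -- average over the quotient W ⧸ P
  let K := P.subgroupOf W
  let Q := W ⧸ K
  haveI : Fintype Q := Fintype.ofFinite Q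
  set n := K.index with hn_def
  have hQcard : Fintype.card Q = n := by
    rw [← Nat.card_eq_fintype_card]; rfl
  let Fbar : Q → A := Quotient.lift (fun w : W => F (w : G)) (by
    intro w1 w2 h
    have h2 : w1⁻¹ * w2 ∈ K := QuotientGroup.leftRel_apply.mp h
    have heq : (w2 : G) = (w1 : G) * ((w1⁻¹ * w2 : W) : G) := by push_cast; group
    show F (w1 : G) = F (w2 : G)
    rw [heq]; exact (hconst _ _ (hPV h2)).symm)
  let a : A := ∏ c : Q, Fbar c
  have heval : ∀ (u : W) (c : Q), Fbar (u • c) = F (u : G) * MulAut.conjNormal (u : G) (Fbar c) := by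
    intro u c
    induction c using Quotient.inductionOn with
    | h w =>
      have h1 : Fbar ((u : W) • (QuotientGroup.mk w : Q)) = F ((u * w : W) : G) := rfl
      have h2 : ((u * w : W) : G) = (u : G) * (w : G) := rfl
      rw [h1, h2, hcoc]
      rfl
  have hre : ∀ u : W, ∏ c : Q, Fbar (u • c) = a := by
    intro u
    exact Fintype.prod_bijective (fun c => u • c) (MulAction.bijective u)
      (fun c => Fbar (u • c)) Fbar (fun c => rfl)
  have hkey : ∀ u : W, F (u : G) ^ n = a * (MulAut.conjNormal (u : G) a)⁻¹ := by
    intro u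
    have h1 : ∏ c : Q, Fbar (u • c) = F (u : G) ^ n * MulAut.conjNormal (u : G) a := by
      calc ∏ c : Q, Fbar (u • c)
          = ∏ c : Q, (F (u : G) * MulAut.conjNormal (u : G) (Fbar c)) := by
            exact Finset.prod_congr rfl (fun c _ => heval u c)
        _ = (∏ _c : Q, F (u : G)) * ∏ c : Q, MulAut.conjNormal (u : G) (Fbar c) :=
            Finset.prod_mul_distrib
        _ = F (u : G) ^ n * MulAut.conjNormal (u : G) a := by
            rw [Finset.prod_const, Finset.card_univ, hQcard, map_prod]
    exact eq_mul_inv_of_mul_eq ((h1.symm.trans (hre u)))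
  -- arithmetic : n is invertible mod p
  have hcop : Nat.Coprime n p := (Nat.Prime.coprime_iff_not_dvd hp |>.mpr hn).symm
  have heuler : n ^ (p - 1) % p = 1 % p := by
    have := Nat.ModEq.pow_totient hcop
    rwa [Nat.totient_prime hp] at this
  have h1p : 1 % p = 1 := Nat.mod_eq_of_lt hp.one_lt
  have hpk : n ^ (p - 1) = p * (n ^ (p - 1) / p) + 1 := by
    have := Nat.div_add_mod (n ^ (p - 1)) p
    omega
  have hnm : n * n ^ (p - 2) = n ^ (p - 1) := by
    rw [← pow_succ']
    congr 1
    have := hp.two_le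
    omega
  set b : A := a ^ (n ^ (p - 2)) with hb_def
  have hFu : ∀ u : W, F (u : G) = b * (MulAut.conjNormal (u : G) b)⁻¹ := by
    intro u
    have h5 : F (u : G) ^ (n * n ^ (p - 2)) = b * (MulAut.conjNormal (u : G) b)⁻¹ := by
      rw [pow_mul, hkey u, mul_pow, inv_pow, ← map_pow, hb_def]
    have h6 : F (u : G) ^ (n * n ^ (p - 2)) = F (u : G) := by
      rw [hnm, hpk, pow_add, pow_one, pow_mul, hFp, one_pow, one_mul]
    rw [← h6, h5]
  -- conclude
  refine ⟨(b : G)⁻¹, A.inv_mem b.2, ?_⟩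
  have hle : Subgroup.map (MulAut.conj (b : G)⁻¹).toMonoidHom W ≤ V := by
    rintro x ⟨u, hu, rfl⟩
    have e2 : (F u : G) = (b : G) * (u * (b : G) * u⁻¹)⁻¹ := by
      have := congrArg (fun z : A => (z : G)) (hFu ⟨u, hu⟩)
      simpa [MulAut.conjNormal_apply] using this
    have hβ : ((hV.equiv u).2 : G) = (F u : G)⁻¹ * u :=
      eq_inv_mul_of_mul_eq (hFβ u)
    have comm2 : (b : G)⁻¹ * (u * (b : G) * u⁻¹) = (u * (b : G) * u⁻¹) * (b : G)⁻¹ :=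
      mul_comm_of_mem_isMulCommutative A (A.inv_mem b.2)
        (Subgroup.Normal.conj_mem ‹A.Normal› _ b.2 u)
    have hfinal : (MulAut.conj (b : G)⁻¹).toMonoidHom u = ((hV.equiv u).2 : G) := by
      show (b : G)⁻¹ * u * ((b : G)⁻¹)⁻¹ = _
      rw [hβ, e2]
      rw [show ((b : G) * (u * (b : G) * u⁻¹)⁻¹)⁻¹ * u = ((u * (b : G) * u⁻¹) * (b : G)⁻¹) * u
        by group]
      rw [← comm2]
      group
    rw [hfinal]
    exact hβV u
  exact Subgroup.eq_of_le_of_card_ge hle (by rw [map_conj_card, hcard])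

private lemma map_conj_one {G : Type*} [Group G] (K : Subgroup G) :
    Subgroup.map (MulAut.conj (1 : G)).toMonoidHom K = K := by
  ext x
  simp [MulAut.conj]

theorem complements_sylowConjugate_imp_conjugate
    {G : Type*} [Group G] [Finite G] (A H : Subgroup G) [A.Normal] [IsMulCommutative A]
    (hH : Subgroup.IsComplement' A H)
    (hirr : ∀ B : Subgroup G, B ≤ A → (∀ h ∈ H, ∀ b ∈ B, h * b * h⁻¹ ∈ B) →
      B = ⊥ ∨ B = A)
    (U V : Subgroup G) (hU : Subgroup.IsComplement' A U) (hV : Subgroup.IsComplement' A V)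
    (h : Subgroup.SylowConjugate U V) :
    Subgroup.IsConjugate U V := by
  classical
  by_cases hA : A = ⊥
  · subst hA
    have hU' : U = ⊤ := Subgroup.isComplement'_bot_left.mp hU
    have hV' : V = ⊤ := Subgroup.isComplement'_bot_left.mp hV
    exact ⟨1, by rw [hU', hV', map_conj_one]⟩
  · have hcA : Nat.card A ≠ 1 := by simpa [Subgroup.card_eq_one] using hA
    obtain ⟨p, hp, hpdvd⟩ := Nat.exists_prime_and_dvd hcA
    haveI := Fact.mk hp
    -- A has exponent p, by irreducibility
    have hexp : ∀ a ∈ A, a ^ p = 1 := by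
      let B : Subgroup G :=
        { carrier := {x | x ∈ A ∧ x ^ p = 1}
          one_mem' := ⟨A.one_mem, one_pow p⟩
          mul_mem' := by
            rintro x y ⟨hxA, hxp⟩ ⟨hyA, hyp⟩
            refine ⟨A.mul_mem hxA hyA, ?_⟩
            have hcomm : Commute x y := mul_comm_of_mem_isMulCommutative A hxA hyA
            rw [hcomm.mul_pow, hxp, hyp, one_mul]
          inv_mem' := by
            rintro x ⟨hxA, hxp⟩
            exact ⟨A.inv_mem hxA, by rw [inv_pow, hxp, inv_one]⟩ }
      have hBA : B ≤ A := fun x hx => hx.1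
      have hBH : ∀ g ∈ H, ∀ b ∈ B, g * b * g⁻¹ ∈ B := by
        rintro g _ x ⟨hxA, hxp⟩
        refine ⟨Subgroup.Normal.conj_mem ‹A.Normal› _ hxA g, ?_⟩
        rw [conj_pow, hxp, mul_one, mul_inv_cancel]
      have hBbot : B ≠ ⊥ := by
        haveI : Fintype A := Fintype.ofFinite _
        obtain ⟨x, hx⟩ := exists_prime_orderOf_dvd_card (G := A) p
          (by rwa [← Nat.card_eq_fintype_card])
        intro hBeq
        have hxp : (x : G) ^ p = 1 := by
          have h1 : x ^ p = 1 := by rw [← hx]; exact pow_orderOf_eq_one x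
          exact_mod_cast congrArg (fun z : A => (z : G)) h1
        have hx1 : (x : G) ∈ B := ⟨x.2, hxp⟩
        rw [hBeq, Subgroup.mem_bot] at hx1
        have : x = 1 := by exact_mod_cast hx1
        rw [this, orderOf_one] at hx
        exact hp.one_lt.ne' hx.symm
      rcases hirr B hBA hBH with h1 | h2
      · exact absurd h1 hBbot
      · intro a ha
        rw [← h2] at ha
        exact ha.2
    -- use Sylow conjugacy at p
    obtain ⟨P, Qs, g, hg⟩ := h p hp
    set P' := (P : Subgroup U).map U.subtype with hP'
    set Q' := (Qs : Subgroup V).map V.subtype with hQ'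
    set V₂ := Subgroup.map (MulAut.conj g⁻¹).toMonoidHom V with hV₂
    have hPU : P' ≤ U := Subgroup.map_subtype_le _
    have hQV : Q' ≤ V := Subgroup.map_subtype_le _
    have hPV₂ : P' ≤ V₂ := by
      have h1 : P' = Subgroup.map (MulAut.conj g⁻¹).toMonoidHom Q' := by
        rw [← hg, map_conj_map_conj, inv_mul_cancel, map_conj_one]
      rw [h1, hV₂]
      exact Subgroup.map_mono hQV
    have hV2comp : A.IsComplement' V₂ := by
      apply Subgroup.isComplement'_of_card_mul_and_disjoint
      · rw [hV₂, map_conj_card]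
        exact hV.card_mul
      · rw [Subgroup.disjoint_def]
        intro x hxA hxV₂
        rw [hV₂] at hxV₂
        obtain ⟨v, hv, rfl⟩ := hxV₂
        have hvA : v ∈ A := by
          have := Subgroup.Normal.conj_mem ‹A.Normal› _ hxA g
          simpa [MulAut.conj_apply, mul_assoc] using this
        have hv1 : v = 1 := Subgroup.disjoint_def.mp hV.disjoint hvA hv
        simp [hv1]
    have hidx : ¬ p ∣ (P'.subgroupOf U).index := by
      have heq : P'.subgroupOf U = (P : Subgroup U) :=
        Subgroup.comap_map_eq_self_of_injective (Subgroup.subtype_injective U) _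
      haveI : (P : Subgroup U).FiniteIndex := ⟨Subgroup.index_ne_zero_of_finite⟩
      rw [heq]
      exact P.not_dvd_index
    have hcardUV : Nat.card U = Nat.card V₂ := by
      have h1 := hU.card_mul
      have h2 := hV2comp.card_mul
      have h3 : 0 < Nat.card A := Nat.card_pos
      exact Nat.eq_of_mul_eq_mul_left h3 (h1.trans h2.symm)
    obtain ⟨b, _, hmap⟩ := key_conj A U V₂ P' hp hexp hV2comp hPU hPV₂ hidx hcardUV
    refine ⟨g * b, ?_⟩
    rw [← map_conj_map_conj, hmap, hV₂, map_conj_map_conj, mul_inv_cancel, map_conj_one]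
end
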